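/- For every n ≥ 2 and every subset S of {1,...,n}, the number of permutations of {1,...,n} with peak set exactly S is divisible by 2^{n - |S| - 1}. -/

import Mathlib

/-- The peak set (1-based indices) of a list: `i` is a peak if `1 < i < length`
and the `(i-1)`-st entry is less than the `i`-th, which is greater than the `(i+1)`-st. -/
def peaks (l : List ℕ) : Finset ℕ :=
  (Finset.Icc 2 (l.length - 1)).filter (fun i =>
    l.getD (i - 2) 0 < l.getD (i - 1) 0 ∧ l.getD i 0 < l.getD (i - 1) 0)

/-- `l` is (the one-line notation of) a permutation of `{1,...,n}`. -/
def IsPermOf (n : ℕ) (l : List ℕ) : Prop := l.Perm (List.range' 1 n)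

/-- The number of permutations of `{1,...,n}` with peak set exactly `S`. -/
noncomputable def numPerms (n : ℕ) (S : Finset ℕ) : ℕ :=
  {l : List ℕ | IsPermOf n l ∧ peaks l = S}.ncard

/-- `S` is `n`-admissible: some permutation of `{1,...,n}` has peak set exactly `S`. -/
def Admissible (n : ℕ) (S : Finset ℕ) : Prop :=
  ∃ l : List ℕ, IsPermOf n l ∧ peaks l = S

/-!
Insert the largest letter `n + 1` into a permutation `σ` of `{1, …, n}`. At the front this
shifts the peak set of `σ` up by one and at the back it keeps it; at an interior position `j`
it creates the peak `j + 1`, destroys peaks at `j` and `j + 1`, and shifts the later ones.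
Counting by the position of `n + 1`, with `P(n, S) = numPerms n S` and `M_s = eraseShift S s`
(delete `s` from `S` and close the gap), gives for an admissible `S`

  `P(n+1, S) = P(n, S - 1) + P(n, S) + ∑ s ∈ S, (P(n, M_s) + P(n, M_s ∪ {s-1}) + P(n, M_s ∪ {s}))`.

The sets `M_s ∪ {s}` and `M_t ∪ {t - 1}` agree for consecutive elements `s < t` of `S`, so the
terms indexed by sets of size at most `|S|` add up to `2 (P(n, S - 1) + ∑ s, P(n, M_s ∪ {s}))`,
while the `M_s` have `|S| - 1` elements. Induction on `n` then yields `2 ^ (n - |S| - 1)`.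
-/

open Finset

lemma List.idxOf_insertIdx_of_notMem {α : Type*} [BEq α] [LawfulBEq α] {l : List α} {a : α}
    {i : ℕ} (ha : a ∉ l) (hi : i ≤ l.length) : (l.insertIdx i a).idxOf a = i := by
  induction l generalizing i with
  | nil => simp_all
  | cons b l ih =>
    rw [List.mem_cons, not_or] at ha
    cases i with
    | zero => simp
    | succ i =>
      rw [List.insertIdx_succ_cons, List.idxOf_cons_ne _ (Ne.symm ha.1),
        ih ha.2 (by simpa using hi)]

lemma List.insertIdx_eraseIdx_idxOf {α : Type*} [BEq α] [LawfulBEq α] {l : List α} {a : α}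
    (ha : a ∈ l) : (l.eraseIdx (l.idxOf a)).insertIdx (l.idxOf a) a = l := by
  have hi := List.idxOf_lt_length_of_mem ha
  conv_rhs => rw [← List.insertIdx_eraseIdx_getElem hi]
  rw [List.getElem_idxOf hi]

lemma List.getD_insertIdx {α : Type*} {l : List α} {j : ℕ} (hj : j ≤ l.length) (x d : α)
    (t : ℕ) : (l.insertIdx j x).getD t d =
      if t < j then l.getD t d else if t = j then x else l.getD (t - 1) d := by
  simp only [List.getD_eq_getElem?_getD, List.getElem?_insertIdx]
  split_ifs <;> simp_all

def perms (n : ℕ) : Finset (List ℕ) := (List.range' 1 n).permutations.toFinset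

lemma mem_perms {n : ℕ} {l : List ℕ} : l ∈ perms n ↔ IsPermOf n l := by
  simp [perms, IsPermOf, List.mem_permutations]

lemma numPerms_eq_card (n : ℕ) (S : Finset ℕ) :
    numPerms n S = #{l ∈ perms n | peaks l = S} := by
  rw [numPerms, ← Set.ncard_coe_finset]
  congr 1
  ext l
  simp [mem_perms]

namespace IsPermOf

variable {n : ℕ} {l : List ℕ}

lemma length_eq (h : IsPermOf n l) : l.length = n := by
  simpa using List.Perm.length_eq h

lemma mem_iff (h : IsPermOf n l) {v : ℕ} : v ∈ l ↔ 1 ≤ v ∧ v ≤ n := by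
  rw [List.Perm.mem_iff h, List.mem_range'_1]
  omega

lemma lt_of_mem (h : IsPermOf n l) {v : ℕ} (hv : v ∈ l) : v < n + 1 := by
  have := (h.mem_iff).1 hv
  omega

lemma succ_mem (h : IsPermOf (n + 1) l) : n + 1 ∈ l :=
  h.mem_iff.2 ⟨by omega, le_rfl⟩

lemma succ_iff : IsPermOf (n + 1) l ↔ l.Perm ((n + 1) :: List.range' 1 n) := by
  rw [IsPermOf, List.range'_concat, one_mul, add_comm 1 n]
  have := List.perm_append_singleton (n + 1) (List.range' 1 n)
  exact ⟨fun h => h.trans this, fun h => h.trans this.symm⟩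

lemma insertIdx_succ (h : IsPermOf n l) {j : ℕ} (hj : j ≤ n) :
    IsPermOf (n + 1) (l.insertIdx j (n + 1)) :=
  succ_iff.2 <| (List.perm_insertIdx _ _ (h.length_eq ▸ hj)).trans (h.cons _)

lemma eraseIdx_idxOf (h : IsPermOf (n + 1) l) : IsPermOf n (l.eraseIdx (l.idxOf (n + 1))) := by
  have hi : l.idxOf (n + 1) < l.length := List.idxOf_lt_length_of_mem h.succ_mem
  have hperm := List.getElem_cons_eraseIdx_perm hi
  rw [List.getElem_idxOf hi] at hperm
  exact (List.perm_cons _).1 (hperm.trans (succ_iff.1 h))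

end IsPermOf

/-- Every permutation of `{1, …, n + 1}` arises in exactly one way by inserting `n + 1` into a
permutation of `{1, …, n}`. -/
lemma numPerms_succ_eq_sum (n : ℕ) (S : Finset ℕ) :
    numPerms (n + 1) S =
      ∑ j ∈ range (n + 1), #{σ ∈ perms n | peaks (σ.insertIdx j (n + 1)) = S} := by
  have hbij : #{p ∈ perms n ×ˢ range (n + 1) | peaks (p.1.insertIdx p.2 (n + 1)) = S} =
      #{π ∈ perms (n + 1) | peaks π = S} := by
    refine card_nbij' (fun p => p.1.insertIdx p.2 (n + 1))
      (fun π => (π.eraseIdx (π.idxOf (n + 1)), π.idxOf (n + 1))) ?_ ?_ ?_ ?_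
    · rintro ⟨σ, j⟩ hp
      simp only [coe_filter, mem_product, mem_perms, mem_range, Set.mem_ofPred_eq] at hp ⊢
      exact ⟨hp.1.1.insertIdx_succ (by omega), hp.2⟩
    · intro π hπ
      simp only [coe_filter, mem_product, mem_perms, mem_range, Set.mem_ofPred_eq] at hπ ⊢
      have hi : π.idxOf (n + 1) < π.length := List.idxOf_lt_length_of_mem hπ.1.succ_mem
      refine ⟨⟨hπ.1.eraseIdx_idxOf, hπ.1.length_eq ▸ hi⟩, ?_⟩
      rw [List.insertIdx_eraseIdx_idxOf hπ.1.succ_mem]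
      exact hπ.2
    · rintro ⟨σ, j⟩ hp
      simp only [coe_filter, mem_product, mem_perms, mem_range, Set.mem_ofPred_eq] at hp
      have hj : (σ.insertIdx j (n + 1)).idxOf (n + 1) = j :=
        List.idxOf_insertIdx_of_notMem (fun h => (hp.1.1.lt_of_mem h).false)
          (by rw [hp.1.1.length_eq]; omega)
      simp [hj]
    · intro π hπ
      simp only [coe_filter, mem_perms, Set.mem_ofPred_eq] at hπ
      exact List.insertIdx_eraseIdx_idxOf hπ.1.succ_mem
  rw [numPerms_eq_card, ← hbij, card_filter, sum_product_right]
  simp only [card_filter]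

lemma mem_peaks {l : List ℕ} {i : ℕ} : i ∈ peaks l ↔ 2 ≤ i ∧ i < l.length ∧
    l.getD (i - 2) 0 < l.getD (i - 1) 0 ∧ l.getD i 0 < l.getD (i - 1) 0 := by
  simp only [peaks, mem_filter, mem_Icc]
  omega

lemma add_one_notMem_peaks {l : List ℕ} {i : ℕ} (hi : i ∈ peaks l) : i + 1 ∉ peaks l := by
  rw [mem_peaks] at hi ⊢
  simp only [Nat.add_sub_cancel, show i + 1 - 2 = i - 1 by omega]
  omega

namespace Admissible

variable {n : ℕ} {S : Finset ℕ}

lemma subset_Icc (h : Admissible n S) : S ⊆ Icc 2 (n - 1) := by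
  obtain ⟨l, hl, rfl⟩ := h
  rw [← hl.length_eq]
  exact filter_subset _ _

lemma add_one_notMem (h : Admissible n S) {s : ℕ} (hs : s ∈ S) : s + 1 ∉ S := by
  obtain ⟨l, -, rfl⟩ := h
  exact add_one_notMem_peaks hs

end Admissible

lemma numPerms_eq_zero_of_not_admissible {n : ℕ} {S : Finset ℕ} (h : ¬Admissible n S) :
    numPerms n S = 0 := by
  rw [numPerms_eq_card, card_eq_zero, filter_eq_empty_iff]
  exact fun l hl hS => h ⟨l, mem_perms.1 hl, hS⟩

section InsertMax

variable {σ : List ℕ} {x : ℕ}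

-- `peaks` pads the list with `0`, so `x` has to beat the padding as well as the entries.
lemma mem_peaks_insertIdx (hx : ∀ v ∈ σ, v < x) (hx0 : 0 < x) {j : ℕ} (hj : j ≤ σ.length)
    (i : ℕ) : i ∈ peaks (σ.insertIdx j x) ↔
      (i < j ∧ i ∈ peaks σ) ∨ (i = j + 1 ∧ 0 < j ∧ j < σ.length) ∨
        (j + 3 ≤ i ∧ i - 1 ∈ peaks σ) := by
  have hgetD (t : ℕ) : σ.getD t 0 < x := by
    rcases lt_or_ge t σ.length with h | h
    · rw [List.getD_eq_getElem _ _ h]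
      exact hx _ (List.getElem_mem h)
    · rwa [List.getD_eq_default _ _ h]
  have := hgetD (i - 3); have := hgetD (i - 2); have := hgetD (i - 1); have := hgetD i
  simp only [mem_peaks, List.length_insertIdx_of_le_length hj, List.getD_insertIdx hj,
    show i - 2 - 1 = i - 3 by omega, show i - 1 - 1 = i - 2 by omega,
    show i - 1 - 2 = i - 3 by omega]
  split_ifs <;> omega

lemma peaks_insertIdx_zero (hx : ∀ v ∈ σ, v < x) (hx0 : 0 < x) :
    peaks (σ.insertIdx 0 x) = (peaks σ).image (· + 1) := by
  ext i
  rw [mem_peaks_insertIdx hx hx0 (Nat.zero_le _), mem_image]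
  constructor
  · rintro (⟨h, -⟩ | ⟨-, h, -⟩ | ⟨h, hp⟩)
    · omega
    · omega
    · exact ⟨i - 1, hp, by omega⟩
  · rintro ⟨p, hp, rfl⟩
    have := (mem_peaks.1 hp).1
    exact Or.inr (Or.inr ⟨by omega, by simpa using hp⟩)

lemma peaks_insertIdx_length (hx : ∀ v ∈ σ, v < x) (hx0 : 0 < x) :
    peaks (σ.insertIdx σ.length x) = peaks σ := by
  ext i
  rw [mem_peaks_insertIdx hx hx0 le_rfl]
  have hlt (t : ℕ) (ht : t ∈ peaks σ) : t < σ.length := (mem_peaks.1 ht).2.1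
  constructor
  · rintro (⟨-, hp⟩ | ⟨-, -, h⟩ | ⟨h, hp⟩)
    · exact hp
    · omega
    · have := hlt _ hp
      omega
  · exact fun hp => Or.inl ⟨hlt i hp, hp⟩

end InsertMax

def eraseShift (S : Finset ℕ) (s : ℕ) : Finset ℕ :=
  (S.erase s).image fun i => if i < s then i else i - 1

lemma mem_eraseShift {S : Finset ℕ} {s x : ℕ} :
    x ∈ eraseShift S s ↔ (x < s ∧ x ∈ S) ∨ (s ≤ x ∧ x + 1 ∈ S) := by
  simp only [eraseShift, mem_image, mem_erase]
  constructor
  · rintro ⟨i, ⟨hne, hi⟩, rfl⟩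
    split_ifs with h
    · exact Or.inl ⟨h, hi⟩
    · exact Or.inr ⟨by omega, by rwa [Nat.sub_add_cancel (by omega)]⟩
  · rintro (⟨h, hx⟩ | ⟨h, hx⟩)
    · exact ⟨x, ⟨by omega, hx⟩, if_pos h⟩
    · exact ⟨x + 1, ⟨by omega, hx⟩, by simp; omega⟩

lemma peaks_insertIdx_eq_iff {σ : List ℕ} {x : ℕ} (hx : ∀ v ∈ σ, v < x) (hx0 : 0 < x) {j : ℕ}
    (hj0 : 0 < j) (hj : j < σ.length) (S : Finset ℕ) :
    peaks (σ.insertIdx j x) = S ↔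
      j + 1 ∈ S ∧ j + 2 ∉ S ∧ ((peaks σ).erase j).erase (j + 1) = eraseShift S (j + 1) := by
  have hmem := mem_peaks_insertIdx hx hx0 hj.le
  constructor
  · rintro rfl
    refine ⟨(hmem _).2 (Or.inr (Or.inl ⟨rfl, hj0, hj⟩)), fun h => ?_, ?_⟩
    · rcases (hmem _).1 h with h | h | h <;> omega
    ext i
    simp only [mem_erase, mem_eraseShift, hmem, Nat.add_sub_cancel]
    grind
  · rintro ⟨hS, hS2, hP⟩
    have hP' (t : ℕ) (h0 : t ≠ j) (h1 : t ≠ j + 1) :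
        t ∈ peaks σ ↔ (t < j + 1 ∧ t ∈ S) ∨ (j + 1 ≤ t ∧ t + 1 ∈ S) := by
      rw [← mem_eraseShift, ← hP, mem_erase, mem_erase]
      tauto
    have hjS : j ∉ S := fun h => by
      have := hP ▸ mem_eraseShift.2 (Or.inl ⟨j.lt_succ_self, h⟩)
      simp at this
    ext i
    rw [hmem]
    rcases lt_trichotomy i j with hi | rfl | hi
    · rw [hP' i (by omega) (by omega)]
      constructor
      · rintro (⟨-, (⟨-, h⟩ | ⟨h, -⟩)⟩ | h | h) <;> first | assumption | omega
      · exact fun h => Or.inl ⟨hi, Or.inl ⟨by omega, h⟩⟩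
    · simp only [hjS, iff_false]
      omega
    rcases (by omega : i = j + 1 ∨ i = j + 2 ∨ j + 3 ≤ i) with rfl | rfl | hi
    · simp only [hS, iff_true]
      exact Or.inr (Or.inl ⟨trivial, hj0, hj⟩)
    · simp only [hS2, iff_false]
      omega
    · rw [hP' (i - 1) (by omega) (by omega), Nat.sub_add_cancel (by omega)]
      constructor
      · rintro (⟨h, -⟩ | ⟨h, -⟩ | ⟨-, (⟨h, -⟩ | ⟨-, h⟩)⟩) <;> first | assumption | omega
      · exact fun h => Or.inr (Or.inr ⟨hi, Or.inr ⟨by omega, h⟩⟩)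

lemma card_filter_erase_eq {ι α : Type*} [DecidableEq ι] [DecidableEq α] (X : Finset ι)
    (g : ι → Finset α) {a : α} {M : Finset α} (ha : a ∉ M) :
    #{x ∈ X | (g x).erase a = M} = #{x ∈ X | g x = M} + #{x ∈ X | g x = insert a M} := by
  have hiff (T : Finset α) : T.erase a = M ↔ T = M ∨ T = insert a M := by
    constructor
    · rintro rfl
      by_cases h : a ∈ T
      · exact Or.inr (insert_erase h).symm
      · exact Or.inl (erase_eq_of_notMem h).symm
    · rintro (rfl | rfl)
      · exact erase_eq_of_notMem ha
      · exact erase_insert ha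
  simp only [hiff]
  rw [filter_or]
  refine card_union_of_disjoint (disjoint_filter.2 fun x _ h h' => ha ?_)
  rw [← h, h']
  exact mem_insert_self a M

section Count

variable {n : ℕ} {S : Finset ℕ}

lemma card_peaks_insertIdx_zero (hS : ∀ s ∈ S, 1 ≤ s) :
    #{σ ∈ perms n | peaks (σ.insertIdx 0 (n + 1)) = S} = numPerms n (S.image (· - 1)) := by
  rw [numPerms_eq_card]
  refine congrArg card (filter_congr fun σ hσ => ?_)
  rw [peaks_insertIdx_zero (fun v => (mem_perms.1 hσ).lt_of_mem) n.succ_pos]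
  have hS' : (S.image (· - 1)).image (· + 1) = S := by
    rw [image_image]
    exact (image_congr fun s hs => Nat.sub_add_cancel (hS s hs)).trans image_id
  constructor
  · rintro rfl
    simp [image_image, Function.comp_def]
  · intro h
    rw [h, hS']

lemma card_peaks_insertIdx_length :
    #{σ ∈ perms n | peaks (σ.insertIdx n (n + 1)) = S} = numPerms n S := by
  rw [numPerms_eq_card]
  refine congrArg card (filter_congr fun σ hσ => ?_)
  have hσ := mem_perms.1 hσ
  have h := peaks_insertIdx_length (fun v => hσ.lt_of_mem) n.succ_pos
  rw [hσ.length_eq] at h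
  rw [h]

lemma card_peaks_insertIdx_eq_zero {j : ℕ} (hj0 : 0 < j) (hj : j < n) (hjS : j + 1 ∉ S) :
    #{σ ∈ perms n | peaks (σ.insertIdx j (n + 1)) = S} = 0 := by
  refine card_eq_zero.2 (filter_eq_empty_iff.2 fun σ hσ h => hjS ?_)
  have hσ := mem_perms.1 hσ
  rw [peaks_insertIdx_eq_iff (fun v => hσ.lt_of_mem) n.succ_pos hj0 (hσ.length_eq ▸ hj)] at h
  exact h.1

lemma card_peaks_insertIdx (hS : Admissible (n + 1) S) {j : ℕ} (hj0 : 0 < j) (hj : j < n)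
    (hjS : j + 1 ∈ S) :
    #{σ ∈ perms n | peaks (σ.insertIdx j (n + 1)) = S} =
      numPerms n (eraseShift S (j + 1)) + numPerms n (insert j (eraseShift S (j + 1))) +
        numPerms n (insert (j + 1) (eraseShift S (j + 1))) := by
  set M := eraseShift S (j + 1)
  have hj1M : j + 1 ∉ M := fun h => by
    rcases mem_eraseShift.1 h with h | h
    · omega
    · exact hS.add_one_notMem hjS h.2
  have hjM : j ∉ M := fun h => by
    rcases mem_eraseShift.1 h with h | h
    · exact hS.add_one_notMem h.2 hjS
    · omega
  have hadj : numPerms n (insert j (insert (j + 1) M)) = 0 :=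
    numPerms_eq_zero_of_not_admissible fun h =>
      h.add_one_notMem (mem_insert_self _ _) (mem_insert_of_mem (mem_insert_self _ _))
  have hfilter : #{σ ∈ perms n | peaks (σ.insertIdx j (n + 1)) = S} =
      #{σ ∈ perms n | ((peaks σ).erase j).erase (j + 1) = M} := by
    refine congrArg card (filter_congr fun σ hσ => ?_)
    have hσ := mem_perms.1 hσ
    rw [peaks_insertIdx_eq_iff (fun v => hσ.lt_of_mem) n.succ_pos hj0 (hσ.length_eq ▸ hj)]
    exact ⟨fun h => h.2.2, fun h => ⟨hjS, hS.add_one_notMem hjS, h⟩⟩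
  rw [hfilter, card_filter_erase_eq _ _ hj1M, card_filter_erase_eq _ _ hjM,
    card_filter_erase_eq _ _ (by simp [hjM]), ← numPerms_eq_card, ← numPerms_eq_card,
    ← numPerms_eq_card, ← numPerms_eq_card, hadj]
  ring

end Count

lemma card_eraseShift_lt {S : Finset ℕ} {s : ℕ} (hs : s ∈ S) : #(eraseShift S s) < #S :=
  card_image_le.trans_lt (card_erase_lt_of_mem hs)

lemma eraseShift_insert_of_lt {S : Finset ℕ} {a s : ℕ} (has : a < s) :
    eraseShift (insert a S) s = insert a (eraseShift S s) := by
  rw [eraseShift, erase_insert_of_ne has.ne, image_insert, if_pos has, eraseShift]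

lemma eraseShift_insert_self {S : Finset ℕ} {a : ℕ} (ha : ∀ x ∈ S, a < x) :
    eraseShift (insert a S) a = S.image (· - 1) := by
  rw [eraseShift, erase_insert fun h => lt_irrefl a (ha a h)]
  exact image_congr fun x hx => if_neg (ha x hx).not_gt

/-- For `S = {s₁ < ⋯ < s_k}` one has `insert sᵢ (eraseShift S sᵢ) =
insert (sᵢ₊₁ - 1) (eraseShift S sᵢ₊₁)`, so the two sums telescope. -/
lemma sum_insert_eraseShift_telescope {M : Type*} [AddCommMonoid M] (S : Finset ℕ)
    (f : Finset ℕ → M) :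
    ∑ s ∈ S, f (insert (s - 1) (eraseShift S s)) + f S =
      f (S.image (· - 1)) + ∑ s ∈ S, f (insert s (eraseShift S s)) := by
  induction S using Finset.induction_on_min generalizing f with
  | empty => simp
  | insert a S ha ih =>
    have haS : a ∉ S := fun h => lt_irrefl a (ha a h)
    have hins (b : ℕ) {s : ℕ} (hs : s ∈ S) :
        f (insert b (eraseShift (insert a S) s)) = f (insert a (insert b (eraseShift S s))) := by
      rw [eraseShift_insert_of_lt (ha s hs), insert_comm]
    rw [sum_insert haS, sum_insert haS, sum_congr rfl fun s hs => hins (s - 1) hs,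
      sum_congr rfl fun s hs => hins s hs,
      eraseShift_insert_self ha, image_insert, add_assoc, ih fun T => f (insert a T)]

section Recursion

variable {n : ℕ} {S : Finset ℕ}

lemma numPerms_succ (hn : 0 < n) (hS : Admissible (n + 1) S) :
    numPerms (n + 1) S = numPerms n (S.image (· - 1)) + numPerms n S +
      ∑ s ∈ S, (numPerms n (eraseShift S s) + numPerms n (insert (s - 1) (eraseShift S s)) +
        numPerms n (insert s (eraseShift S s))) := by
  have hS2 (s : ℕ) (hs : s ∈ S) : 2 ≤ s ∧ s ≤ n := by simpa using hS.subset_Icc hs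
  set c : ℕ → ℕ := fun j => #{σ ∈ perms n | peaks (σ.insertIdx j (n + 1)) = S}
  have hrange : range (n + 1) = insert 0 (insert n (Ioo 0 n)) := by
    ext j
    simp only [mem_range, mem_insert, mem_Ioo]
    omega
  have hinterior : ∑ j ∈ Ioo 0 n, c j = ∑ j ∈ S.image (· - 1), c j := by
    have himage : S.image (· - 1) = {j ∈ Ioo 0 n | j + 1 ∈ S} := by
      ext j
      simp only [mem_image, mem_filter, mem_Ioo]
      constructor
      · rintro ⟨s, hs, rfl⟩
        have := hS2 s hs
        exact ⟨by omega, by rwa [Nat.sub_add_cancel (by omega)]⟩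
      · exact fun h => ⟨j + 1, h.2, rfl⟩
    rw [himage, sum_filter_of_ne]
    intro j hj hc
    by_contra hjS
    exact hc (card_peaks_insertIdx_eq_zero (mem_Ioo.1 hj).1 (mem_Ioo.1 hj).2 hjS)
  have hc (s : ℕ) (hs : s ∈ S) : c (s - 1) = numPerms n (eraseShift S s) +
      numPerms n (insert (s - 1) (eraseShift S s)) + numPerms n (insert s (eraseShift S s)) := by
    have := hS2 s hs
    simp only [c]
    rw [card_peaks_insertIdx hS (by omega) (by omega) (by rwa [Nat.sub_add_cancel (by omega)]),
      Nat.sub_add_cancel (by omega)]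
  rw [numPerms_succ_eq_sum, hrange, sum_insert (by simp; omega), sum_insert (by simp),
    hinterior, sum_image fun s hs t ht h => by have := hS2 s hs; have := hS2 t ht; omega,
    sum_congr rfl hc, card_peaks_insertIdx_zero fun s hs => by have := hS2 s hs; omega,
    card_peaks_insertIdx_length]
  ring

lemma numPerms_succ_eq_add_two_mul (hn : 0 < n) (hS : Admissible (n + 1) S) :
    numPerms (n + 1) S = ∑ s ∈ S, numPerms n (eraseShift S s) +
      2 * (numPerms n (S.image (· - 1)) + ∑ s ∈ S, numPerms n (insert s (eraseShift S s))) := by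
  have := sum_insert_eraseShift_telescope S (numPerms n)
  rw [numPerms_succ hn hS, sum_add_distrib, sum_add_distrib]
  omega

end Recursion

theorem stmt_14_general (n : ℕ) (S : Finset ℕ) :
    2 ^ (n - S.card - 1) ∣ numPerms n S := by
  induction n generalizing S with
  | zero => simp
  | succ n ih =>
    rcases Nat.eq_zero_or_pos n with rfl | hn
    · simp
    by_cases hS : Admissible (n + 1) S
    swap
    · simp [numPerms_eq_zero_of_not_admissible hS]
    have hdvd (T : Finset ℕ) {e : ℕ} (he : e ≤ n - #T - 1) : 2 ^ e ∣ numPerms n T :=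
      (pow_dvd_pow 2 he).trans (ih T)
    rcases le_or_gt n #S with hk | hk
    · rw [show n + 1 - #S - 1 = 0 by omega, pow_zero]
      exact one_dvd _
    rw [numPerms_succ_eq_add_two_mul hn hS]
    refine dvd_add (dvd_sum fun s hs => hdvd _ ?_) ?_
    · have := card_eraseShift_lt hs
      omega
    rw [show n + 1 - #S - 1 = (n - #S - 1) + 1 by omega, pow_succ']
    refine mul_dvd_mul_left 2 (dvd_add (hdvd _ ?_) (dvd_sum fun s hs => hdvd _ ?_))
    · have := card_image_le (s := S) (f := (· - 1))
      omega
    · have := card_eraseShift_lt hs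
      have := card_insert_le s (eraseShift S s)
      omega

theorem stmt_14 (n : ℕ) (hn : 2 ≤ n) (S : Finset ℕ) (hS : S ⊆ Finset.Icc 1 n) :
    2 ^ (n - S.card - 1) ∣ numPerms n S :=
  stmt_14_general n S
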